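/- Let R be a blind bisimulation on the nodes of a λ-graph. Let n, m be nodes with n R m, and τ a trace such that the path from n with trace τ crosses the Abs node l and the path from m with trace τ crosses the Abs node l'. Then l R l' holds if and only if index(l, path from n with trace τ) = index(l', path from m with trace τ). -/
import Mathlib


/-- Directions for paths in a λ-graph. -/
inductive Dir : Type where
  | left | body | right
deriving DecidableEq

/-- Labels of nodes of a (pre–)λ-graph. -/
inductive NodeLabel (Node Name : Type) : Type where
  | app (l r : Node)
  | abs (body : Node)
  | fvar (name : Name)
  | bvar (binder : Node)

/-- The four kinds of nodes. -/
inductive NodeKind : Type where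
  | app | abs | fvar | bvar
deriving DecidableEq

/-- The kind of a node label. -/
def NodeLabel.kind {Node Name : Type} : NodeLabel Node Name → NodeKind
  | .app _ _ => .app
  | .abs _ => .abs
  | .fvar _ => .fvar
  | .bvar _ => .bvar

/-- Locally nameless λ-terms. -/
inductive Term (Name : Type) : Type where
  | bvar (i : ℕ)
  | fvar (a : Name)
  | app (t s : Term Name)
  | lam (t : Term Name)

/-- Reflexive–symmetric–transitive closure `R*` of a relation. -/
inductive RstClosure {α : Type _} (R : α → α → Prop) : α → α → Prop where
  | base {a b : α} : R a b → RstClosure R a b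
  | refl (a : α) : RstClosure R a a
  | symm {a b : α} : RstClosure R a b → RstClosure R b a
  | trans {a b c : α} : RstClosure R a b → RstClosure R b c → RstClosure R a c

/-- A pre–λ-graph: every node carries a label; the binder of a bound variable node is an
abstraction node; the name of a free variable node uniquely identifies it. -/
structure PreLamGraph (Node Name : Type) : Type where
  label : Node → NodeLabel Node Name
  binder_abs : ∀ n l, label n = .bvar l → ∃ b, label l = .abs b
  fvar_inj : ∀ n m a, label n = .fvar a → label m = .fvar a → n = m

namespace PreLamGraph

variable {Node Name : Type}

/-- `Path G τ n m`: there is a path from `n` to `m` with trace `τ`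
(binding edges are never followed). -/
inductive Path (G : PreLamGraph Node Name) : List Dir → Node → Node → Prop where
  | nil (n : Node) : Path G [] n n
  | abs {τ : List Dir} {n m b : Node} :
      Path G τ n m → G.label m = .abs b → Path G (.body :: τ) n b
  | appL {τ : List Dir} {n m l r : Node} :
      Path G τ n m → G.label m = .app l r → Path G (.left :: τ) n l
  | appR {τ : List Dir} {n m l r : Node} :
      Path G τ n m → G.label m = .app l r → Path G (.right :: τ) n r

/-- `r` is a root: the only path ending at `r` is the empty path from `r` itself. -/
def Root (G : PreLamGraph Node Name) (r : Node) : Prop :=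
  ∀ (τ : List Dir) (n : Node), G.Path τ n r → τ = []

/-- `Crosses G τ n p`: the path from `n` with trace `τ` crosses the node `p`. -/
inductive Crosses (G : PreLamGraph Node Name) : List Dir → Node → Node → Prop where
  | here {τ : List Dir} {n p : Node} : G.Path τ n p → Crosses G τ n p
  | step {d : Dir} {τ : List Dir} {n p m : Node} :
      Crosses G τ n p → G.Path (d :: τ) n m → Crosses G (d :: τ) n p

/-- `m` dominates `n`: every path from a root to `n` crosses `m`. -/
def Dominates (G : PreLamGraph Node Name) (m n : Node) : Prop :=
  ∀ (r : Node) (τ : List Dir), G.Root r → G.Path τ r n → G.Crosses τ r m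

/-- Acyclicity: a path from a node to itself must have empty trace. -/
def Acyclic (G : PreLamGraph Node Name) : Prop :=
  ∀ (n : Node) (τ : List Dir), G.Path τ n n → τ = []

/-- Every bound variable node is dominated by its binder. -/
def Dominated (G : PreLamGraph Node Name) : Prop :=
  ∀ (n l : Node), G.label n = .bvar l → G.Dominates l n

/-- A query relates only root nodes. -/
def IsQuery (G : PreLamGraph Node Name) (Q : Node → Node → Prop) : Prop :=
  ∀ n m, Q n m → G.Root n ∧ G.Root m

/-- A relation is homogeneous if it only relates nodes of the same kind. -/
def Homogeneous (G : PreLamGraph Node Name) (R : Node → Node → Prop) : Prop :=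
  ∀ n m, R n m → (G.label n).kind = (G.label m).kind

/-- Closure under the left propagation rule. -/
def ClosedAppL (G : PreLamGraph Node Name) (R : Node → Node → Prop) : Prop :=
  ∀ n m n1 n2 m1 m2, G.label n = .app n1 n2 → G.label m = .app m1 m2 → R n m → R n1 m1

/-- Closure under the right propagation rule. -/
def ClosedAppR (G : PreLamGraph Node Name) (R : Node → Node → Prop) : Prop :=
  ∀ n m n1 n2 m1 m2, G.label n = .app n1 n2 → G.label m = .app m1 m2 → R n m → R n2 m2

/-- Closure under the body propagation rule. -/
def ClosedAbs (G : PreLamGraph Node Name) (R : Node → Node → Prop) : Prop :=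
  ∀ n m n' m', G.label n = .abs n' → G.label m = .abs m' → R n m → R n' m'

/-- Closure under the scoping rule. -/
def ClosedScope (G : PreLamGraph Node Name) (R : Node → Node → Prop) : Prop :=
  ∀ n m l l', G.label n = .bvar l → G.label m = .bvar l' → R n m → R l l'

/-- Closure under the three propagation rules. -/
def ClosedProp (G : PreLamGraph Node Name) (R : Node → Node → Prop) : Prop :=
  G.ClosedAppL R ∧ G.ClosedAppR R ∧ G.ClosedAbs R

/-- A blind bisimulation is a homogeneous relation closed under the propagation rules. -/
def BlindBisimulation (G : PreLamGraph Node Name) (R : Node → Node → Prop) : Prop :=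
  G.Homogeneous R ∧ G.ClosedProp R

/-- A bisimulation is a homogeneous relation closed under the propagation rules
and the scoping rule. -/
def Bisimulation (G : PreLamGraph Node Name) (R : Node → Node → Prop) : Prop :=
  G.BlindBisimulation R ∧ G.ClosedScope R

/-- A relation is open if whenever it relates two free variable nodes they are equal. -/
def OpenRel (G : PreLamGraph Node Name) (R : Node → Node → Prop) : Prop :=
  ∀ n m a b, G.label n = .fvar a → G.label m = .fvar b → R n m → n = m

/-- A sharing equivalence is an open bisimulation that is also an equivalence relation. -/
def SharingEquivalence (G : PreLamGraph Node Name) (R : Node → Node → Prop) : Prop :=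
  G.OpenRel R ∧ G.Bisimulation R ∧ Equivalence R

/-- A blind sharing equivalence is an equivalence relation that is a blind bisimulation. -/
def BlindSharingEquivalence (G : PreLamGraph Node Name) (R : Node → Node → Prop) : Prop :=
  Equivalence R ∧ G.BlindBisimulation R

/-- The propagation `R↓`: the smallest relation containing `R` and closed under the
propagation rules. -/
inductive Propagation (G : PreLamGraph Node Name) (R : Node → Node → Prop) :
    Node → Node → Prop where
  | base {n m : Node} : R n m → Propagation G R n m
  | appL {n m n1 n2 m1 m2 : Node} :
      Propagation G R n m → G.label n = .app n1 n2 → G.label m = .app m1 m2 →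
      Propagation G R n1 m1
  | appR {n m n1 n2 m1 m2 : Node} :
      Propagation G R n m → G.label n = .app n1 n2 → G.label m = .app m1 m2 →
      Propagation G R n2 m2
  | abs {n m n' m' : Node} :
      Propagation G R n m → G.label n = .abs n' → G.label m = .abs m' →
      Propagation G R n' m'

/-- The spreading `R⇓`: the smallest equivalence relation containing `R` and closed
under the propagation rules. -/
inductive Spreading (G : PreLamGraph Node Name) (R : Node → Node → Prop) :
    Node → Node → Prop where
  | base {n m : Node} : R n m → Spreading G R n m
  | refl (n : Node) : Spreading G R n n
  | symm {n m : Node} : Spreading G R n m → Spreading G R m n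
  | trans {n m p : Node} : Spreading G R n m → Spreading G R m p → Spreading G R n p
  | appL {n m n1 n2 m1 m2 : Node} :
      Spreading G R n m → G.label n = .app n1 n2 → G.label m = .app m1 m2 →
      Spreading G R n1 m1
  | appR {n m n1 n2 m1 m2 : Node} :
      Spreading G R n m → G.label n = .app n1 n2 → G.label m = .app m1 m2 →
      Spreading G R n2 m2
  | abs {n m n' m' : Node} :
      Spreading G R n m → G.label n = .abs n' → G.label m = .abs m' →
      Spreading G R n' m'

/-- `IndexOf G l n τ k`: the de Bruijn index of the abstraction node `l` along the path
from `n` with trace `τ` (which crosses `l`) is `k`. -/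
inductive IndexOf (G : PreLamGraph Node Name) (l n : Node) : List Dir → ℕ → Prop where
  | here {τ : List Dir} : G.Path τ n l → IndexOf G l n τ 0
  | abs {d : Dir} {τ : List Dir} {m b : Node} {k : ℕ} :
      G.Path (d :: τ) n m → G.label m = .abs b → m ≠ l →
      IndexOf G l n τ k → IndexOf G l n (d :: τ) (k + 1)
  | other {d : Dir} {τ : List Dir} {m : Node} {k : ℕ} :
      G.Path (d :: τ) n m → (∀ b, G.label m ≠ .abs b) →
      IndexOf G l n τ k → IndexOf G l n (d :: τ) k

/-- `Readback G r τ t`: the readback of the endpoint of the access path from `r` with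
trace `τ` is the locally nameless term `t`. -/
inductive Readback (G : PreLamGraph Node Name) (r : Node) : List Dir → Term Name → Prop where
  | bvar {τ : List Dir} {n l : Node} {k : ℕ} :
      G.Path τ r n → G.label n = .bvar l → G.IndexOf l r τ k →
      Readback G r τ (.bvar k)
  | fvar {τ : List Dir} {n : Node} {a : Name} :
      G.Path τ r n → G.label n = .fvar a → Readback G r τ (.fvar a)
  | abs {τ : List Dir} {n b : Node} {t : Term Name} :
      G.Path τ r n → G.label n = .abs b → Readback G r (.body :: τ) t →
      Readback G r τ (.lam t)
  | app {τ : List Dir} {n n1 n2 : Node} {t1 t2 : Term Name} :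
      G.Path τ r n → G.label n = .app n1 n2 →
      Readback G r (.left :: τ) t1 → Readback G r (.right :: τ) t2 →
      Readback G r τ (.app t1 t2)

end PreLamGraph

/-- A λ-graph: a finite, acyclic and dominated pre–λ-graph. -/
structure LamGraph (Node Name : Type) extends PreLamGraph Node Name where
  finite : Finite Node
  acyclic : toPreLamGraph.Acyclic
  dominated : toPreLamGraph.Dominated
namespace PreLamGraph

variable {Node Name : Type} {G : PreLamGraph Node Name}

lemma abs_of_kind {x : Node} (h : (G.label x).kind = .abs) :
    ∃ b, G.label x = .abs b := by
  cases hx : G.label x <;> rw [hx] at h <;> simp [NodeLabel.kind] at h <;> exact ⟨_, rfl⟩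

lemma app_of_kind {x : Node} (h : (G.label x).kind = .app) :
    ∃ a b, G.label x = .app a b := by
  cases hx : G.label x <;> rw [hx] at h <;> simp [NodeLabel.kind] at h <;> exact ⟨_, _, rfl⟩

lemma path_det {τ : List Dir} {n p q : Node} (h1 : G.Path τ n p) (h2 : G.Path τ n q) :
    p = q := by
  induction h1 generalizing q with
  | nil => cases h2; rfl
  | abs hp hl ih =>
    cases h2 with
    | abs hp' hl' =>
      cases ih hp'
      rw [hl] at hl'; cases hl'; rfl
  | appL hp hl ih =>
    cases h2 with
    | appL hp' hl' =>
      cases ih hp'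
      rw [hl] at hl'; cases hl'; rfl
  | appR hp hl ih =>
    cases h2 with
    | appR hp' hl' =>
      cases ih hp'
      rw [hl] at hl'; cases hl'; rfl

lemma path_comp {σ δ : List Dir} {n p q : Node} (h1 : G.Path σ n p) (h2 : G.Path δ p q) :
    G.Path (δ ++ σ) n q := by
  induction h2 with
  | nil => exact h1
  | abs hp hl ih => exact .abs (ih h1) hl
  | appL hp hl ih => exact .appL (ih h1) hl
  | appR hp hl ih => exact .appR (ih h1) hl

lemma path_decomp {δ σ : List Dir} {n q : Node} (h : G.Path (δ ++ σ) n q) :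
    ∃ p, G.Path σ n p ∧ G.Path δ p q := by
  induction δ generalizing q with
  | nil => exact ⟨q, h, .nil q⟩
  | cons d δ ih =>
    cases h with
    | abs hp hl => obtain ⟨p, h1, h2⟩ := ih hp; exact ⟨p, h1, .abs h2 hl⟩
    | appL hp hl => obtain ⟨p, h1, h2⟩ := ih hp; exact ⟨p, h1, .appL h2 hl⟩
    | appR hp hl => obtain ⟨p, h1, h2⟩ := ih hp; exact ⟨p, h1, .appR h2 hl⟩

lemma transportL {R : Node → Node → Prop} (hhom : G.Homogeneous R) (hcl : G.ClosedProp R)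
    {a b : Node} {δ : List Dir} {c : Node} (hab : R a b) (h : G.Path δ a c) :
    ∃ d, G.Path δ b d ∧ R c d := by
  induction h with
  | nil => exact ⟨b, .nil b, hab⟩
  | @abs τ n mm bb hp hl ih =>
    obtain ⟨d, hd, hrd⟩ := ih hab
    have hk := hhom _ _ hrd
    rw [hl] at hk
    obtain ⟨b', hb'⟩ := abs_of_kind hk.symm
    exact ⟨b', .abs hd hb', hcl.2.2 _ _ _ _ hl hb' hrd⟩
  | @appL τ n mm n1 n2 hp hl ih =>
    obtain ⟨d, hd, hrd⟩ := ih hab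
    have hk := hhom _ _ hrd
    rw [hl] at hk
    obtain ⟨m1, m2, hb'⟩ := app_of_kind hk.symm
    exact ⟨m1, .appL hd hb', hcl.1 _ _ _ _ _ _ hl hb' hrd⟩
  | @appR τ n mm n1 n2 hp hl ih =>
    obtain ⟨d, hd, hrd⟩ := ih hab
    have hk := hhom _ _ hrd
    rw [hl] at hk
    obtain ⟨m1, m2, hb'⟩ := app_of_kind hk.symm
    exact ⟨m2, .appR hd hb', hcl.2.1 _ _ _ _ _ _ hl hb' hrd⟩

lemma transportR {R : Node → Node → Prop} (hhom : G.Homogeneous R) (hcl : G.ClosedProp R)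
    {a b : Node} {δ : List Dir} {d : Node} (hab : R a b) (h : G.Path δ b d) :
    ∃ c, G.Path δ a c ∧ R c d := by
  induction h with
  | nil => exact ⟨a, .nil a, hab⟩
  | @abs τ n mm bb hp hl ih =>
    obtain ⟨c, hc, hrc⟩ := ih hab
    have hk := hhom _ _ hrc
    rw [hl] at hk
    obtain ⟨b', hb'⟩ := abs_of_kind hk
    exact ⟨b', .abs hc hb', hcl.2.2 _ _ _ _ hb' hl hrc⟩
  | @appL τ n mm n1 n2 hp hl ih =>
    obtain ⟨c, hc, hrc⟩ := ih hab
    have hk := hhom _ _ hrc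
    rw [hl] at hk
    obtain ⟨m1, m2, hb'⟩ := app_of_kind hk
    exact ⟨m1, .appL hc hb', hcl.1 _ _ _ _ _ _ hb' hl hrc⟩
  | @appR τ n mm n1 n2 hp hl ih =>
    obtain ⟨c, hc, hrc⟩ := ih hab
    have hk := hhom _ _ hrc
    rw [hl] at hk
    obtain ⟨m1, m2, hb'⟩ := app_of_kind hk
    exact ⟨m2, .appR hc hb', hcl.2.1 _ _ _ _ _ _ hb' hl hrc⟩

lemma crosses_elim {τ : List Dir} {n l : Node} (h : G.Crosses τ n l) :
    (∃ e, G.Path τ n e) ∧ ∃ δ σ, τ = δ ++ σ ∧ G.Path σ n l := by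
  induction h with
  | here hp => exact ⟨⟨_, hp⟩, [], _, rfl, hp⟩
  | @step d τ n p mm hc hp ih =>
    obtain ⟨_, δ, σ, heq, hσ⟩ := ih
    exact ⟨⟨_, hp⟩, d :: δ, σ, by rw [heq]; rfl, hσ⟩

lemma suffix_unique (hacy : G.Acyclic) {σ δ : List Dir} {n l : Node}
    (h1 : G.Path σ n l) (h2 : G.Path (δ ++ σ) n l) : δ = [] := by
  obtain ⟨p, hp, hpl⟩ := path_decomp h2
  cases path_det h1 hp
  exact hacy _ _ hpl

lemma no_infinite_chain [Finite Node] (hacy : G.Acyclic) {δ : List Dir} (hδ : δ ≠ [])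
    (g : ℕ → Node) (hg : ∀ k, G.Path δ (g k) (g (k + 1))) : False := by
  have key : ∀ j i, ∃ ρ : List Dir, G.Path ρ (g i) (g (i + j)) ∧ (j ≠ 0 → ρ ≠ []) := by
    intro j
    induction j with
    | zero => intro i; exact ⟨[], .nil _, by simp⟩
    | succ j ih =>
      intro i
      obtain ⟨ρ, hρ, _⟩ := ih (i + 1)
      refine ⟨ρ ++ δ, ?_, fun _ => by simp [hδ]⟩
      have := path_comp (hg i) hρ
      rwa [show i + 1 + j = i + (j + 1) by omega] at this
  obtain ⟨i, j, hne, heq⟩ := Finite.exists_ne_map_eq_of_infinite g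
  rcases Nat.lt_or_ge i j with hlt | hge
  · obtain ⟨ρ, hρ, hne'⟩ := key (j - i) i
    rw [show i + (j - i) = j by omega, ← heq] at hρ
    exact hne' (by omega) (hacy _ _ hρ)
  · have hlt : j < i := lt_of_le_of_ne hge (Ne.symm hne)
    obtain ⟨ρ, hρ, hne'⟩ := key (i - j) j
    rw [show j + (i - j) = i by omega, heq] at hρ
    exact hne' (by omega) (hacy _ _ hρ)

lemma no_chain [Finite Node] (hacy : G.Acyclic) (S : Node → Node → Prop)
    (hL : ∀ a b (δ : List Dir) c, S a b → G.Path δ a c → ∃ d, G.Path δ b d ∧ S c d)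
    (hL' : ∀ a b (δ : List Dir) d, S a b → G.Path δ b d → ∃ c, G.Path δ a c ∧ S c d)
    {δ : List Dir} (hδ : δ ≠ []) {a b c : Node}
    (hab : G.Path δ a b) (hac : S a c) (hbc : S b c) : False := by
  let T := {t : Node × Node × Node // G.Path δ t.1 t.2.1 ∧ S t.1 t.2.2 ∧ S t.2.1 t.2.2}
  have step : ∀ t : T, ∃ t' : T, t'.1.1 = t.1.2.1 := by
    rintro ⟨⟨z, z', x⟩, hp, s1, s2⟩
    obtain ⟨x', hpx, sx⟩ := hL z x δ z' s1 hp
    obtain ⟨z'', hpz, sz⟩ := hL' z' x δ x' s2 hpx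
    exact ⟨⟨⟨z', z'', x'⟩, hpz, sx, sz⟩, rfl⟩
  let f : ℕ → T := fun k => Nat.rec ⟨⟨a, b, c⟩, hab, hac, hbc⟩ (fun _ t => (step t).choose) k
  have hstep : ∀ k, (f (k + 1)).1.1 = (f k).1.2.1 := fun k => (step (f k)).choose_spec
  refine no_infinite_chain hacy hδ (fun k => (f k).1.1) (fun k => ?_)
  show G.Path δ (f k).1.1 (f (k + 1)).1.1
  rw [hstep k]
  exact (f k).2.1

lemma joint_index (hacy : G.Acyclic) {R : Node → Node → Prop}
    (hhom : G.Homogeneous R) (hcl : G.ClosedProp R)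
    {n m l l' : Node} (hnm : R n m) {σ : List Dir}
    (h1 : G.Path σ n l) (h2 : G.Path σ m l') :
    ∀ (δ : List Dir) (e : Node), G.Path (δ ++ σ) n e →
      ∃ k, G.IndexOf l n (δ ++ σ) k ∧ G.IndexOf l' m (δ ++ σ) k := by
  intro δ
  induction δ with
  | nil => intro e he; exact ⟨0, .here h1, .here h2⟩
  | cons d δ ih =>
    intro e he
    have he0 : ∃ e0, G.Path (δ ++ σ) n e0 := by
      cases he with
      | abs hp _ => exact ⟨_, hp⟩
      | appL hp _ => exact ⟨_, hp⟩
      | appR hp _ => exact ⟨_, hp⟩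
    obtain ⟨e0, he0⟩ := he0
    obtain ⟨k, hk1, hk2⟩ := ih e0 he0
    obtain ⟨e', he', hee'⟩ := transportL hhom hcl hnm (show G.Path ((d :: δ) ++ σ) n e from he)
    have hkind := hhom _ _ hee'
    cases hle : G.label e with
    | abs b =>
      rw [hle] at hkind
      obtain ⟨b', hb'⟩ := abs_of_kind hkind.symm
      have hnel : e ≠ l := by
        intro h
        rw [h] at he
        exact absurd (suffix_unique hacy h1 he) (by simp)
      have hnel' : e' ≠ l' := by
        intro h
        rw [h] at he'
        exact absurd (suffix_unique hacy h2 he') (by simp)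
      exact ⟨k + 1, .abs he hle hnel hk1, .abs he' hb' hnel' hk2⟩
    | app a b =>
      refine ⟨k, .other he (by simp [hle]) hk1, .other he' ?_ hk2⟩
      intro bb hbb
      rw [hle, hbb] at hkind; simp [NodeLabel.kind] at hkind
    | fvar a =>
      refine ⟨k, .other he (by simp [hle]) hk1, .other he' ?_ hk2⟩
      intro bb hbb
      rw [hle, hbb] at hkind; simp [NodeLabel.kind] at hkind
    | bvar a =>
      refine ⟨k, .other he (by simp [hle]) hk1, .other he' ?_ hk2⟩
      intro bb hbb
      rw [hle, hbb] at hkind; simp [NodeLabel.kind] at hkind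

lemma index_rel {R : Node → Node → Prop}
    (hhom : G.Homogeneous R) (hcl : G.ClosedProp R)
    {n m l l' : Node} (hnm : R n m) {b b' : Node}
    (hl : G.label l = .abs b) (hl' : G.label l' = .abs b')
    {τ : List Dir} {k : ℕ}
    (h1 : G.IndexOf l n τ k) (h2 : G.IndexOf l' m τ k) :
    ∃ σ, G.Path σ n l ∧ G.Path σ m l' := by
  revert h2
  induction h1 with
  | @here τ hp =>
    intro h2
    obtain ⟨q, hq, hlq⟩ := transportL hhom hcl hnm hp
    cases h2 with
    | here hp' => exact ⟨τ, hp, hp'⟩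
    | other hp' hnabs _ =>
      cases path_det hq hp'
      have hk := hhom _ _ hlq
      rw [hl] at hk
      obtain ⟨bb, hbb⟩ := abs_of_kind hk.symm
      exact absurd hbb (hnabs bb)
  | @abs d τ e bb k1 hp hle hne hidx ih =>
    intro h2
    obtain ⟨e', he', hee'⟩ := transportL hhom hcl hnm hp
    cases h2 with
    | abs hp' hle' hne' hidx' =>
      exact ih hidx'
    | other hp' hnabs _ =>
      cases path_det he' hp'
      have hk := hhom _ _ hee'
      rw [hle] at hk
      obtain ⟨cc, hcc⟩ := abs_of_kind hk.symm
      exact absurd hcc (hnabs cc)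
  | @other d τ e k1 hp hnabs hidx ih =>
    intro h2
    obtain ⟨e', he', hee'⟩ := transportL hhom hcl hnm hp
    have hk := hhom _ _ hee'
    cases h2 with
    | here hp' =>
      cases path_det he' hp'
      rw [hl'] at hk
      obtain ⟨cc, hcc⟩ := abs_of_kind hk
      exact absurd hcc (hnabs cc)
    | abs hp' hle' hne' hidx' =>
      cases path_det he' hp'
      rw [hle'] at hk
      obtain ⟨cc, hcc⟩ := abs_of_kind hk
      exact absurd hcc (hnabs cc)
    | other hp' hnabs' hidx' =>
      exact ih hidx'

lemma suffix_tot {α : Type _} : ∀ {δ1 σ1 δ2 : List α} {σ2 : List α},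
    δ1 ++ σ1 = δ2 ++ σ2 → (∃ γ, σ2 = γ ++ σ1) ∨ ∃ γ, σ1 = γ ++ σ2 := by
  intro δ1
  induction δ1 with
  | nil =>
    intro σ1 δ2 σ2 h
    exact Or.inr ⟨δ2, h⟩
  | cons a δ1 ih =>
    intro σ1 δ2 σ2 h
    cases δ2 with
    | nil => exact Or.inl ⟨a :: δ1, h.symm⟩
    | cons b δ2 =>
      simp only [List.cons_append, List.cons.injEq] at h
      exact ih h.2

end PreLamGraph
open PreLamGraph in
/-- crossed abstraction nodes are related iff their indices coincide. -/
theorem related_iff_same_index {Node Name : Type} (G : LamGraph Node Name)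
    (R : Node → Node → Prop) (hR : G.toPreLamGraph.BlindBisimulation R)
    (n m l l' : Node) (τ : List Dir) (hnm : R n m)
    (hl : ∃ b, G.toPreLamGraph.label l = .abs b)
    (hl' : ∃ b, G.toPreLamGraph.label l' = .abs b)
    (c1 : Crosses G.toPreLamGraph τ n l) (c2 : Crosses G.toPreLamGraph τ m l') :
    R l l' ↔ ∃ k : ℕ, IndexOf G.toPreLamGraph l n τ k ∧
      IndexOf G.toPreLamGraph l' m τ k := by
  have hfin : Finite Node := G.finite
  obtain ⟨hhom, hcl⟩ := hR
  obtain ⟨b, hlb⟩ := hl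
  obtain ⟨b', hlb'⟩ := hl'
  obtain ⟨⟨e, hpe⟩, δ1, σ1, hτ1, hσ1⟩ := crosses_elim c1
  obtain ⟨⟨em, hpem⟩, δ2, σ2, hτ2, hσ2⟩ := crosses_elim c2
  constructor
  · intro hll'
    have hσeq : σ1 = σ2 := by
      rcases suffix_tot (hτ1.symm.trans hτ2) with ⟨γ, hγ⟩ | ⟨γ, hγ⟩
      · cases γ with
        | nil => exact hγ.symm
        | cons d γ' =>
          exfalso
          obtain ⟨p, hp, _⟩ := path_decomp (hτ2 ▸ hpe)
          obtain ⟨p0, hp0, hγp⟩ := path_decomp (hγ ▸ hp)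
          cases path_det hσ1 hp0
          obtain ⟨d', hd', hrd'⟩ := transportL hhom hcl hnm hp
          cases path_det hσ2 hd'
          exact no_chain G.acyclic R
            (fun a b δ c s hq => transportL hhom hcl s hq)
            (fun a b δ d s hq => transportR hhom hcl s hq)
            (by simp : (d :: γ' : List Dir) ≠ []) hγp hll' hrd'
      · cases γ with
        | nil => exact hγ
        | cons d γ' =>
          exfalso
          obtain ⟨p, hp, _⟩ := path_decomp (hτ1 ▸ hpem)
          obtain ⟨q0, hq0, hγp⟩ := path_decomp (hγ ▸ hp)
          cases path_det hσ2 hq0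
          obtain ⟨d', hd', hrd'⟩ := transportL hhom hcl hnm hσ1
          cases path_det hd' hp
          exact no_chain G.acyclic (fun x y => R y x)
            (fun a b δ c s hq => transportR hhom hcl s hq)
            (fun a b δ d s hq => transportL hhom hcl s hq)
            (by simp : (d :: γ' : List Dir) ≠ []) hγp hll' hrd'
    subst hσeq
    obtain ⟨k, hk1, hk2⟩ :=
      joint_index G.acyclic hhom hcl hnm hσ1 hσ2 δ1 e (hτ1 ▸ hpe)
    exact ⟨k, hτ1 ▸ hk1, hτ1 ▸ hk2⟩
  · rintro ⟨k, hk1, hk2⟩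
    obtain ⟨σ, hσn, hσm⟩ := index_rel hhom hcl hnm hlb hlb' hk1 hk2
    obtain ⟨d, hd, hrd⟩ := transportL hhom hcl hnm hσn
    cases path_det hσm hd
    exact hrd
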